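/- The fusion atom is symmetric up to structural congruence: X ⋈ Y ≡ Y ⋈ X, derived from the congruence rules (E1)–(E10) without assuming symmetry as a primitive. -/

import Mathlib

/-- Atom names: either the fusion atom `⋈` or an ordinary constructor name. -/
inductive AName where
  | fuse
  | ctor (s : String)
deriving DecidableEq

/-- HyperLMNtal graphs: `0`, atoms `p(X̄)`, molecules `(G,G)`, hyperlink creation `νX.G`. -/
inductive HGraph where
  | zero
  | atom (p : AName) (xs : List ℕ)
  | mol (g₁ g₂ : HGraph)
  | nu (x : ℕ) (g : HGraph)
deriving DecidableEq

namespace HGraph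

/-- The fusion atom `X ⋈ Y`. -/
def fuseG (x y : ℕ) : HGraph := .atom .fuse [x, y]

/-- Free link names. -/
def fn : HGraph → Finset ℕ
  | .zero => ∅
  | .atom _ xs => xs.toFinset
  | .mol g₁ g₂ => g₁.fn ∪ g₂.fn
  | .nu x g => g.fn.erase x

/-- Capture-avoiding link substitution: `LSubst g x y g'` means `g⟨y/x⟩ = g'`
(all free occurrences of `x` replaced by `y`). -/
inductive LSubst : HGraph → ℕ → ℕ → HGraph → Prop where
  | zero : LSubst .zero x y .zero
  | atom : LSubst (.atom p xs) x y (.atom p (xs.map fun z => if z = x then y else z))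
  | mol : LSubst g₁ x y g₁' → LSubst g₂ x y g₂' →
      LSubst (.mol g₁ g₂) x y (.mol g₁' g₂')
  | nuEq : LSubst (.nu x g) x y (.nu x g)
  | nuNe : z ≠ x → z ≠ y → LSubst g x y g' →
      LSubst (.nu z g) x y (.nu z g')
  | nuCap : y ≠ x → w ∉ g.fn → w ≠ y →
      LSubst g y w g₁ → LSubst g₁ x y g₂ →
      LSubst (.nu y g) x y (.nu w g₂)

/-- Structural congruence `≡` generated by (E1)–(E10). -/
inductive Cong : HGraph → HGraph → Prop where
  | refl : Cong g g
  | symm : Cong g₁ g₂ → Cong g₂ g₁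
  | trans : Cong g₁ g₂ → Cong g₂ g₃ → Cong g₁ g₃
  | e1 : Cong (.mol .zero g) g
  | e2 : Cong (.mol g₁ g₂) (.mol g₂ g₁)
  | e3 : Cong (.mol g₁ (.mol g₂ g₃)) (.mol (.mol g₁ g₂) g₃)
  | e4 : Cong g₁ g₂ → Cong (.mol g₁ g₃) (.mol g₂ g₃)
  | e5 : Cong g₁ g₂ → Cong (.nu x g₁) (.nu x g₂)
  | e6 : x ∈ g.fn ∨ y ∈ g.fn → LSubst g x y g' →
      Cong (.nu x (.mol (fuseG x y) g)) (.nu x g')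
  | e7 : Cong (.nu x (.nu y (fuseG x y))) .zero
  | e8 : Cong (.nu x .zero) .zero
  | e9 : Cong (.nu x (.nu y g)) (.nu y (.nu x g))
  | e10 : x ∉ g₂.fn → Cong (.nu x (.mol g₁ g₂)) (.mol (.nu x g₁) g₂)

end HGraph

/-- A rewrite rule `lhs ⊸ rhs`. -/
structure GRule where
  lhs : HGraph
  rhs : HGraph

/-- The one-step reduction relation `⇝_P` (rules (R1)–(R4)). -/
inductive Red (P : Set GRule) : HGraph → HGraph → Prop where
  | r1 : Red P g₁ g₂ → Red P (.mol g₁ g₃) (.mol g₂ g₃)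
  | r2 : Red P g₁ g₂ → Red P (.nu x g₁) (.nu x g₂)
  | r3 : HGraph.Cong g₁ g₂ → Red P g₂ g₃ → HGraph.Cong g₃ g₄ → Red P g₁ g₄
  | r4 : r ∈ P → Red P r.lhs r.rhs


/-! A fresh link `z` fused to both `x` and `y` can be eliminated by (E6) through either fusion,
so `x ⋈ y ≡ νz.(z ⋈ x, z ⋈ y) ≡ νz.(z ⋈ y, z ⋈ x) ≡ y ⋈ x`. -/

namespace HGraph

instance : Trans Cong Cong Cong := ⟨Cong.trans⟩

theorem mem_fn_fuseG {x y z : ℕ} : z ∈ (fuseG x y).fn ↔ z = x ∨ z = y := by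
  simp [fuseG, fn]

theorem lSubst_fuseG_left {z y : ℕ} (hzy : z ≠ y) (x : ℕ) :
    LSubst (fuseG z y) z x (fuseG x y) := by
  simpa [fuseG, hzy.symm] using LSubst.atom (p := .fuse) (xs := [z, y]) (x := z) (y := x)

theorem Cong.nu_of_notMem_fn {z : ℕ} {g : HGraph} (hz : z ∉ g.fn) : Cong (.nu z g) g :=
  calc Cong (.nu z g) (.nu z (.mol .zero g)) := Cong.e5 Cong.e1.symm
    Cong _ (.mol (.nu z .zero) g) := Cong.e10 hz
    Cong _ (.mol .zero g) := Cong.e4 Cong.e8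
    Cong _ g := Cong.e1

theorem Cong.nu_fuseG_fuseG {x y z : ℕ} (hzx : z ≠ x) (hzy : z ≠ y) :
    Cong (.nu z (.mol (fuseG z x) (fuseG z y))) (fuseG x y) :=
  calc Cong (.nu z (.mol (fuseG z x) (fuseG z y))) (.nu z (fuseG x y)) :=
        Cong.e6 (Or.inl (mem_fn_fuseG.2 (Or.inl rfl))) (lSubst_fuseG_left hzy x)
    Cong _ (fuseG x y) := Cong.nu_of_notMem_fn (by simp [mem_fn_fuseG, hzx, hzy])

end HGraph

/-- symmetry of fusion up to structural congruence: `X ⋈ Y ≡ Y ⋈ X`. -/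
theorem fuse_symm (x y : ℕ) : HGraph.Cong (HGraph.fuseG x y) (HGraph.fuseG y x) := by
  have hx : x + y + 1 ≠ x := by omega
  have hy : x + y + 1 ≠ y := by omega
  exact (HGraph.Cong.nu_fuseG_fuseG hx hy).symm.trans
    ((HGraph.Cong.e5 HGraph.Cong.e2).trans (HGraph.Cong.nu_fuseG_fuseG hy hx))
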